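/- arXiv:2309.16899 — 2 statements merged into one kernel-verified Lean document; each statement's English description precedes it below -/
import Mathlib

section
/- Let W be a symmetric denoiser (symmetric positive semidefinite stochastic matrix), A ∈ ℝ^{m×n}, and 0 < γ < 2/ρ(AᵀA). Set P = W(I − γAᵀA). Then ‖P‖₂ < 1 if and only if ker(I−W) ∩ ker(A) = {0}. -/
open Matrix Filter

/-- Euclidean norm of a vector in ℝ^n. -/
noncomputable def vNorm {n : ℕ} (x : Fin n → ℝ) : ℝ := Real.sqrt (∑ i, x i ^ 2)

/-- Operator 2-norm of a matrix (sup of ‖Mx‖₂ over the unit sphere). -/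
noncomputable def mNorm {m n : ℕ} (M : Matrix (Fin m) (Fin n) ℝ) : ℝ :=
  sSup ((fun x => vNorm (M.mulVec x)) '' {x | vNorm x = 1})

/-- Spectral radius of a square real matrix. -/
noncomputable def sRad {n : ℕ} (M : Matrix (Fin n) (Fin n) ℝ) : ℝ :=
  sSup ((fun μ => |μ|) '' spectrum ℝ M)

section Aux

open scoped RealInnerProductSpace

variable {n : ℕ}

/-- Reinterpret a plain vector as an element of Euclidean space. -/
def toE (x : Fin n → ℝ) : EuclideanSpace ℝ (Fin n) := WithLp.toLp 2 x

lemma vNorm_toE (x : Fin n → ℝ) : vNorm x = ‖toE x‖ := by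
  rw [EuclideanSpace.norm_eq]; simp [vNorm, toE, sq_abs]

lemma inner_toE (x y : Fin n → ℝ) : ⟪toE x, toE y⟫ = ∑ i, x i * y i := by
  simp [toE, PiLp.inner_apply, RCLike.inner_apply, mul_comm]

lemma inner_mulVec_symm {M : Matrix (Fin n) (Fin n) ℝ} (hM : M.IsHermitian)
    (x y : Fin n → ℝ) : ⟪toE (M *ᵥ x), toE y⟫ = ⟪toE x, toE (M *ᵥ y)⟫ := by
  have hsymm : ∀ i j, M i j = M j i := fun i j => by
    simpa using congrFun (congrFun hM j) i
  rw [inner_toE, inner_toE]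
  simp only [Matrix.mulVec, dotProduct]
  calc ∑ i, (∑ j, M i j * x j) * y i = ∑ i, ∑ j, M i j * x j * y i := by
        simp [Finset.sum_mul]
    _ = ∑ j, ∑ i, M i j * x j * y i := Finset.sum_comm
    _ = ∑ j, x j * ∑ i, M j i * y i := by
        refine Finset.sum_congr rfl fun j _ => ?_
        rw [Finset.mul_sum]
        exact Finset.sum_congr rfl fun i _ => by rw [hsymm i j]; ring

lemma inner_eig {M : Matrix (Fin n) (Fin n) ℝ} (hM : M.IsHermitian) (i : Fin n)
    (x : Fin n → ℝ) :
    ⟪hM.eigenvectorBasis i, toE (M *ᵥ x)⟫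
      = hM.eigenvalues i * ⟪hM.eigenvectorBasis i, toE x⟫ := by
  have h1 : ⟪toE (M *ᵥ (hM.eigenvectorBasis i)), toE x⟫
      = ⟪hM.eigenvectorBasis i, toE (M *ᵥ x)⟫ := inner_mulVec_symm hM (hM.eigenvectorBasis i) x
  have h2 : toE (M *ᵥ hM.eigenvectorBasis i)
      = hM.eigenvalues i • (hM.eigenvectorBasis i : EuclideanSpace ℝ (Fin n)) :=
    congrArg toE (hM.mulVec_eigenvectorBasis i)
  rw [← h1, h2, real_inner_smul_left]

lemma norm_sq_eq_sum_inner (b : OrthonormalBasis (Fin n) ℝ (EuclideanSpace ℝ (Fin n)))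
    (x : EuclideanSpace ℝ (Fin n)) : ‖x‖ ^ 2 = ∑ i, ⟪b i, x⟫ ^ 2 := by
  rw [← real_inner_self_eq_norm_sq, ← b.sum_inner_mul_inner x x]
  exact Finset.sum_congr rfl fun i _ => by rw [real_inner_comm x (b i), sq]

lemma eq_zero_of_inner_basis (b : OrthonormalBasis (Fin n) ℝ (EuclideanSpace ℝ (Fin n)))
    {x : EuclideanSpace ℝ (Fin n)} (h : ∀ i, ⟪b i, x⟫ = 0) : x = 0 := by
  have h2 : ‖x‖ ^ 2 = 0 := by rw [norm_sq_eq_sum_inner b x]; simp [h]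
  simpa using pow_eq_zero_iff (n := 2) (by norm_num) |>.mp h2

lemma key_le (b : OrthonormalBasis (Fin n) ℝ (EuclideanSpace ℝ (Fin n)))
    (x y : EuclideanSpace ℝ (Fin n)) (t : Fin n → ℝ)
    (hy : ∀ i, ⟪b i, y⟫ = t i * ⟪b i, x⟫) (ht : ∀ i, t i ^ 2 ≤ 1) :
    ‖y‖ ≤ ‖x‖ ∧ (‖y‖ = ‖x‖ → ∀ i, t i ^ 2 ≠ 1 → ⟪b i, x⟫ = 0) := by
  have hx2 := norm_sq_eq_sum_inner b x
  have hy2 : ‖y‖ ^ 2 = ∑ i, t i ^ 2 * ⟪b i, x⟫ ^ 2 := by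
    rw [norm_sq_eq_sum_inner b y]
    exact Finset.sum_congr rfl fun i _ => by rw [hy i]; ring
  have hle : ‖y‖ ^ 2 ≤ ‖x‖ ^ 2 := by
    rw [hx2, hy2]
    exact Finset.sum_le_sum fun i _ =>
      mul_le_of_le_one_left (sq_nonneg _) (ht i)
  constructor
  · nlinarith [norm_nonneg x, norm_nonneg y]
  · intro heq i hti
    have hsum : ∑ i, (1 - t i ^ 2) * ⟪b i, x⟫ ^ 2 = 0 := by
      have : ∑ i, (1 - t i ^ 2) * ⟪b i, x⟫ ^ 2
          = (∑ i, ⟪b i, x⟫ ^ 2) - ∑ i, t i ^ 2 * ⟪b i, x⟫ ^ 2 := by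
        rw [← Finset.sum_sub_distrib]
        exact Finset.sum_congr rfl fun i _ => by ring
      rw [this, ← hx2, ← hy2, heq, sub_self]
    have hterm := (Finset.sum_eq_zero_iff_of_nonneg (fun i _ =>
      mul_nonneg (by nlinarith [ht i]) (sq_nonneg _))).mp hsum i (Finset.mem_univ i)
    have h1t : 1 - t i ^ 2 ≠ 0 := fun h => hti (by linarith)
    have := (mul_eq_zero.mp hterm).resolve_left h1t
    exact pow_eq_zero_iff (n := 2) (by norm_num) |>.mp this

/-- Perron-type bound: eigenvalues of a symmetric nonnegative stochastic matrix
have absolute value at most 1. -/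
lemma eig_abs_le_one {W : Matrix (Fin n) (Fin n) ℝ} (hW : W.IsHermitian)
    (hWnn : ∀ i j, 0 ≤ W i j) (hWstoch : W.mulVec (fun _ => 1) = fun _ => 1)
    (i : Fin n) : |hW.eigenvalues i| ≤ 1 := by
  set v : Fin n → ℝ := WithLp.ofLp (hW.eigenvectorBasis i) with hv
  have hvne : v ≠ 0 := fun h => hW.eigenvectorBasis.orthonormal.ne_zero i (by simpa [hv] using h)
  have hev : W *ᵥ v = hW.eigenvalues i • v := hW.mulVec_eigenvectorBasis i
  obtain ⟨j0, hj0⟩ := Function.ne_iff.mp hvne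
  obtain ⟨j, -, hj⟩ := Finset.exists_max_image Finset.univ (fun k => |v k|)
    ⟨j0, Finset.mem_univ j0⟩
  have hvj : 0 < |v j| := lt_of_lt_of_le (abs_pos.mpr hj0) (hj j0 (Finset.mem_univ j0))
  have hrow : ∑ k, W j k = 1 := by
    have := congrFun hWstoch j
    simpa [Matrix.mulVec, dotProduct] using this
  have hWv : (W *ᵥ v) j = ∑ k, W j k * v k := rfl
  have habs : |hW.eigenvalues i| * |v j| ≤ |v j| := by
    have h1 : |hW.eigenvalues i * v j| ≤ ∑ k, W j k * |v k| := by
      rw [show hW.eigenvalues i * v j = (W *ᵥ v) j by rw [hev]; rfl, hWv]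
      exact (Finset.abs_sum_le_sum_abs _ _).trans (le_of_eq (Finset.sum_congr rfl
        fun k _ => by rw [abs_mul, abs_of_nonneg (hWnn j k)]))
    have h2 : ∑ k, W j k * |v k| ≤ ∑ k, W j k * |v j| :=
      Finset.sum_le_sum fun k _ =>
        mul_le_mul_of_nonneg_left (hj k (Finset.mem_univ k)) (hWnn j k)
    have h3 : ∑ k, W j k * |v j| = |v j| := by rw [← Finset.sum_mul, hrow, one_mul]
    calc |hW.eigenvalues i| * |v j| = |hW.eigenvalues i * v j| := (abs_mul _ _).symm
      _ ≤ ∑ k, W j k * |v k| := h1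
      _ ≤ ∑ k, W j k * |v j| := h2
      _ = |v j| := h3
  exact le_of_mul_le_mul_right (by linarith) hvj

lemma eig_le_sRad {M : Matrix (Fin n) (Fin n) ℝ} (hM : M.IsHermitian) (i : Fin n) :
    hM.eigenvalues i ≤ sRad M := by
  have hfin : ((fun μ => |μ|) '' spectrum ℝ M).Finite := (M.finite_spectrum).image _
  have hmem : |hM.eigenvalues i| ∈ (fun μ => |μ|) '' spectrum ℝ M :=
    ⟨hM.eigenvalues i, hM.eigenvalues_mem_spectrum_real i, rfl⟩
  exact (le_abs_self _).trans (le_csSup hfin.bddAbove hmem)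

/-- Contraction property of the symmetric denoiser. -/
lemma LW {W : Matrix (Fin n) (Fin n) ℝ} (hW : W.IsHermitian)
    (h0 : ∀ i, 0 ≤ hW.eigenvalues i) (h1 : ∀ i, hW.eigenvalues i ≤ 1) (x : Fin n → ℝ) :
    vNorm (W *ᵥ x) ≤ vNorm x ∧ (vNorm (W *ᵥ x) = vNorm x → W *ᵥ x = x) := by
  set b := hW.eigenvectorBasis with hb
  have hy : ∀ i, ⟪b i, toE (W *ᵥ x)⟫ = hW.eigenvalues i * ⟪b i, toE x⟫ :=
    fun i => inner_eig hW i x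
  have ht : ∀ i, hW.eigenvalues i ^ 2 ≤ 1 := fun i => by nlinarith [h0 i, h1 i]
  obtain ⟨hle, heq⟩ := key_le b (toE x) (toE (W *ᵥ x)) _ hy ht
  refine ⟨by rw [vNorm_toE, vNorm_toE]; exact hle, fun he => ?_⟩
  have hcoef := heq (by rw [vNorm_toE, vNorm_toE] at he; exact he)
  have hz : ∀ i, ⟪b i, toE (W *ᵥ x) - toE x⟫ = 0 := by
    intro i
    rw [inner_sub_right, hy i]
    by_cases hone : hW.eigenvalues i ^ 2 = 1
    · have : hW.eigenvalues i = 1 := by nlinarith [h0 i]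
      rw [this]; ring
    · rw [hcoef i hone]; ring
  have := sub_eq_zero.mp (eq_zero_of_inner_basis b hz)
  simpa [toE] using this

/-- Contraction property of the data-fidelity step. -/
lemma LB {M : Matrix (Fin n) (Fin n) ℝ} (hM : M.IsHermitian) {γ : ℝ} (hγ0 : 0 < γ)
    (h0 : ∀ i, 0 ≤ hM.eigenvalues i) (h2 : ∀ i, γ * hM.eigenvalues i < 2) (x : Fin n → ℝ) :
    vNorm (x - γ • (M *ᵥ x)) ≤ vNorm x ∧
      (vNorm (x - γ • (M *ᵥ x)) = vNorm x → M *ᵥ x = 0) := by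
  set b := hM.eigenvectorBasis with hb
  have hy : ∀ i, ⟪b i, toE (x - γ • (M *ᵥ x))⟫
      = (1 - γ * hM.eigenvalues i) * ⟪b i, toE x⟫ := by
    intro i
    have hsub : toE (x - γ • (M *ᵥ x)) = toE x - γ • toE (M *ᵥ x) := by simp [toE]
    rw [hsub, inner_sub_right, real_inner_smul_right, inner_eig hM i x]; ring
  have ht : ∀ i, (1 - γ * hM.eigenvalues i) ^ 2 ≤ 1 := fun i => by
    nlinarith [mul_nonneg hγ0.le (h0 i), h2 i]
  obtain ⟨hle, heq⟩ := key_le b (toE x) (toE (x - γ • (M *ᵥ x))) _ hy ht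
  refine ⟨by rw [vNorm_toE, vNorm_toE]; exact hle, fun he => ?_⟩
  have hcoef := heq (by rw [vNorm_toE, vNorm_toE] at he; exact he)
  have hz : ∀ i, ⟪b i, toE (M *ᵥ x)⟫ = 0 := by
    intro i
    rw [inner_eig hM i x]
    by_cases h00 : hM.eigenvalues i = 0
    · rw [h00]; ring
    · have hne : (1 - γ * hM.eigenvalues i) ^ 2 ≠ 1 := by
        have hpos : 0 < γ * hM.eigenvalues i :=
          mul_pos hγ0 ((h0 i).lt_of_ne (Ne.symm h00))
        nlinarith [h2 i]
      rw [hcoef i hne, mul_zero]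
  simpa [toE] using eq_zero_of_inner_basis b hz

lemma vNorm_smul (c : ℝ) (x : Fin n → ℝ) : vNorm (c • x) = |c| * vNorm x := by
  rw [vNorm_toE, vNorm_toE, show toE (c • x) = c • toE x by simp [toE], norm_smul,
    Real.norm_eq_abs]

lemma vNorm_continuous (P : Matrix (Fin n) (Fin n) ℝ) :
    Continuous fun x : Fin n → ℝ => vNorm (P *ᵥ x) := by
  unfold vNorm Matrix.mulVec dotProduct
  fun_prop

lemma sum_sq_eq_one {x : Fin n → ℝ} (h : vNorm x = 1) : ∑ i, x i ^ 2 = 1 := by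
  have h0 : 0 ≤ ∑ i, x i ^ 2 := Finset.sum_nonneg fun i _ => sq_nonneg _
  unfold vNorm at h
  nlinarith [Real.sq_sqrt h0, h]

lemma sphere_compact : IsCompact {x : Fin n → ℝ | vNorm x = 1} := by
  have hclosed : IsClosed {x : Fin n → ℝ | vNorm x = 1} := by
    have : Continuous fun x : Fin n → ℝ => vNorm x := by unfold vNorm; fun_prop
    exact isClosed_eq this continuous_const
  refine IsCompact.of_isClosed_subset (isCompact_closedBall 0 1) hclosed ?_
  intro x hx
  rw [Metric.mem_closedBall, dist_zero_right, pi_norm_le_iff_of_nonneg zero_le_one]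
  intro i
  rw [Real.norm_eq_abs, ← Real.sqrt_one, ← Real.sqrt_sq_eq_abs]
  apply Real.sqrt_le_sqrt
  rw [← sum_sq_eq_one hx]
  exact Finset.single_le_sum (fun j _ => sq_nonneg (x j)) (Finset.mem_univ i)

lemma mNorm_lt_one_iff [NeZero n] (P : Matrix (Fin n) (Fin n) ℝ) :
    mNorm P < 1 ↔ ∀ x, vNorm x = 1 → vNorm (P *ᵥ x) < 1 := by
  have hKc : IsCompact ((fun x => vNorm (P *ᵥ x)) '' {x : Fin n → ℝ | vNorm x = 1}) :=
    sphere_compact.image (vNorm_continuous P)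
  have hone : vNorm (Pi.single (0 : Fin n) (1:ℝ)) = 1 := by
    have h : ∑ i, (Pi.single (0:Fin n) (1:ℝ) : Fin n → ℝ) i ^ 2 = 1 := by
      simp [Pi.single_apply, apply_ite (fun t : ℝ => t ^ 2)]
    unfold vNorm
    rw [h]
    exact Real.sqrt_one
  have hKne : ((fun x => vNorm (P *ᵥ x)) '' {x : Fin n → ℝ | vNorm x = 1}).Nonempty :=
    ⟨_, Set.mem_image_of_mem _ hone⟩
  constructor
  · intro h x hx
    exact lt_of_le_of_lt (le_csSup hKc.bddAbove (Set.mem_image_of_mem _ hx)) h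
  · intro h
    obtain ⟨x, hx, hsup⟩ := hKc.sSup_mem hKne
    rw [mNorm, ← hsup]
    exact h x hx

lemma ATA_mulVec_eq_zero {m : ℕ} {A : Matrix (Fin m) (Fin n) ℝ} {x : Fin n → ℝ}
    (h : (Aᵀ * A) *ᵥ x = 0) : A *ᵥ x = 0 := by
  have hdot : x ⬝ᵥ ((Aᵀ * A) *ᵥ x) = ∑ i, (A *ᵥ x) i ^ 2 := by
    rw [← Matrix.mulVec_mulVec, Matrix.dotProduct_mulVec, Matrix.vecMul_transpose]
    simp [dotProduct, sq]
  have hz : ∑ i, (A *ᵥ x) i ^ 2 = 0 := by rw [← hdot, h, dotProduct_zero]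
  funext i
  have := (Finset.sum_eq_zero_iff_of_nonneg (fun j _ => sq_nonneg ((A *ᵥ x) j))).mp hz
    i (Finset.mem_univ i)
  exact pow_eq_zero_iff (n := 2) (by norm_num) |>.mp this

end Aux

/-- For a symmetric denoiser `W` (symmetric PSD stochastic),
`A ∈ ℝ^{m×n}` with `AᵀA ≠ 0`, and `0 < γ < 2/ρ(AᵀA)`, setting
`P = W(I − γAᵀA)`, one has `‖P‖₂ < 1 ↔ ker(I−W) ∩ ker(A) = {0}`. -/
theorem statement2 {m n : ℕ} (W : Matrix (Fin n) (Fin n) ℝ)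
    (A : Matrix (Fin m) (Fin n) ℝ) (γ : ℝ)
    (hWpsd : W.PosSemidef) (hWnn : ∀ i j, 0 ≤ W i j)
    (hWstoch : W.mulVec (fun _ => 1) = fun _ => 1)
    (hAA : Aᵀ * A ≠ 0)
    (hγ0 : 0 < γ) (hγ2 : γ < 2 / sRad (Aᵀ * A))
    (P : Matrix (Fin n) (Fin n) ℝ) (hP : P = W * (1 - γ • (Aᵀ * A))) :
    mNorm P < 1 ↔
      LinearMap.ker (Matrix.mulVecLin (1 - W)) ⊓ LinearMap.ker A.mulVecLin = ⊥ := by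
  haveI : NeZero n := ⟨by
    rintro rfl
    exact hAA (Matrix.ext fun i _ => i.elim0)⟩
  -- basic objects
  have hWh : W.IsHermitian := hWpsd.1
  have hMh : (Aᵀ * A).IsHermitian := by
    have := Matrix.isHermitian_conjTranspose_mul_self A
    rwa [Matrix.conjTranspose_eq_transpose_of_trivial] at this
  have hMpsd : (Aᵀ * A).PosSemidef := by
    have := Matrix.posSemidef_conjTranspose_mul_self A
    rwa [Matrix.conjTranspose_eq_transpose_of_trivial] at this
  have hμ0 : ∀ i, 0 ≤ hWh.eigenvalues i := hWpsd.eigenvalues_nonneg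
  have hμ1 : ∀ i, hWh.eigenvalues i ≤ 1 := fun i =>
    (abs_le.mp (eig_abs_le_one hWh hWnn hWstoch i)).2
  have hlam0 : ∀ i, 0 ≤ hMh.eigenvalues i := hMpsd.eigenvalues_nonneg
  have hρ : 0 < sRad (Aᵀ * A) := by
    by_contra hc
    push_neg at hc
    have h2' : 2 / sRad (Aᵀ * A) ≤ 0 := by
      rcases hc.lt_or_eq with hlt | heq0
      · exact le_of_lt (div_neg_of_pos_of_neg two_pos hlt)
      · rw [heq0, div_zero]
    linarith
  have hγρ : γ * sRad (Aᵀ * A) < 2 := (lt_div_iff₀ hρ).mp hγ2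
  have h2 : ∀ i, γ * hMh.eigenvalues i < 2 := fun i =>
    lt_of_le_of_lt (mul_le_mul_of_nonneg_left (eig_le_sRad hMh i) hγ0.le) hγρ
  -- P acts as the composition
  have hPx : ∀ x : Fin n → ℝ, P *ᵥ x = W *ᵥ (x - γ • ((Aᵀ * A) *ᵥ x)) := by
    intro x
    rw [hP, ← Matrix.mulVec_mulVec]
    rw [Matrix.sub_mulVec, Matrix.one_mulVec, Matrix.smul_mulVec]
  -- kernel characterization
  have hker : (LinearMap.ker (Matrix.mulVecLin (1 - W)) ⊓ LinearMap.ker A.mulVecLin = ⊥)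
      ↔ ∀ x : Fin n → ℝ, W *ᵥ x = x → A *ᵥ x = 0 → x = 0 := by
    rw [Submodule.eq_bot_iff]
    constructor
    · intro h x hw ha
      refine h x (Submodule.mem_inf.mpr ⟨LinearMap.mem_ker.mpr ?_, LinearMap.mem_ker.mpr ?_⟩)
      · rw [Matrix.mulVecLin_apply, Matrix.sub_mulVec, Matrix.one_mulVec, hw, sub_self]
      · rw [Matrix.mulVecLin_apply, ha]
    · intro h x hx
      obtain ⟨h1, hker2⟩ := Submodule.mem_inf.mp hx
      rw [LinearMap.mem_ker, Matrix.mulVecLin_apply, Matrix.sub_mulVec, Matrix.one_mulVec,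
        sub_eq_zero] at h1
      rw [LinearMap.mem_ker, Matrix.mulVecLin_apply] at hker2
      exact h x h1.symm hker2
  rw [hker, mNorm_lt_one_iff]
  constructor
  · -- mNorm < 1 → trivial intersection
    intro h x hw ha
    by_contra hx0
    have hvx : vNorm x ≠ 0 := fun h0 => by
      rw [vNorm_toE] at h0
      have hz : toE x = 0 := norm_eq_zero.mp h0
      exact hx0 (by simpa [toE] using hz)
    have hvxpos : 0 < vNorm x := lt_of_le_of_ne (Real.sqrt_nonneg _) (Ne.symm hvx)
    have hfix : P *ᵥ x = x := by
      rw [hPx, ← Matrix.mulVec_mulVec, ha, Matrix.mulVec_zero, smul_zero, sub_zero, hw]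
    set u := (vNorm x)⁻¹ • x with hu
    have hu1 : vNorm u = 1 := by
      rw [hu, vNorm_smul, abs_of_pos (inv_pos.mpr hvxpos), inv_mul_cancel₀ hvx]
    have hPu : P *ᵥ u = u := by rw [hu, Matrix.mulVec_smul, hfix]
    have := h u hu1
    rw [hPu, hu1] at this
    exact lt_irrefl 1 this
  · -- trivial intersection → contraction on the sphere
    intro h x hx
    obtain ⟨hble, hbeq⟩ := LB hMh hγ0 hlam0 h2 x
    obtain ⟨hwle, hweq⟩ := LW hWh hμ0 hμ1 (x - γ • ((Aᵀ * A) *ᵥ x))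
    have hchain : vNorm (P *ᵥ x) ≤ vNorm x := by
      rw [hPx]
      exact le_trans hwle hble
    rcases lt_or_eq_of_le hchain with hlt | heq
    · rwa [hx] at hlt
    · exfalso
      have hyx : vNorm (x - γ • ((Aᵀ * A) *ᵥ x)) = vNorm x := by
        apply le_antisymm hble
        calc vNorm x = vNorm (P *ᵥ x) := heq.symm
          _ = vNorm (W *ᵥ (x - γ • ((Aᵀ * A) *ᵥ x))) := by rw [hPx]
          _ ≤ vNorm (x - γ • ((Aᵀ * A) *ᵥ x)) := hwle
      have hM0 : (Aᵀ * A) *ᵥ x = 0 := hbeq hyx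
      have hA0 : A *ᵥ x = 0 := ATA_mulVec_eq_zero hM0
      have hyx2 : x - γ • ((Aᵀ * A) *ᵥ x) = x := by rw [hM0, smul_zero, sub_zero]
      have hWfix : W *ᵥ x = x := by
        rw [hyx2] at hwle hweq
        have hxw : vNorm x = vNorm (W *ᵥ x) := by rw [← heq, hPx, hyx2]
        exact hweq (le_antisymm hwle hxw.le)
      have hx0 : x = 0 := h x hWfix hA0
      rw [hx0] at hx
      simp [vNorm] at hx
end

section
/- Let W = D^{-1}K be a kernel denoiser (K symmetric PSD nonnegative, Ke > 0 entrywise, D = diag(Ke)) with 1 a simple eigenvalue of W. Let A be a nonzero diagonal {0,1} matrix and G = I − γAᵀA with 0 < γ < 2, and P = WG. Then ‖P‖_D := ‖D^{1/2} P D^{-1/2}‖₂ < 1. -/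
open Matrix Filter

lemma vNorm_nonneg {n : ℕ} (x : Fin n → ℝ) : 0 ≤ vNorm x := Real.sqrt_nonneg _

lemma vNorm_sq {n : ℕ} (x : Fin n → ℝ) : vNorm x ^ 2 = x ⬝ᵥ x := by
  rw [vNorm, Real.sq_sqrt (by positivity)]
  simp [dotProduct, sq]

lemma continuous_vNorm {n : ℕ} : Continuous (vNorm (n := n)) := by
  apply Real.continuous_sqrt.comp
  exact continuous_finset_sum _ fun i _ => (continuous_apply i).pow 2

lemma continuous_mulVec {m n : ℕ} (M : Matrix (Fin m) (Fin n) ℝ) :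
    Continuous (fun x => M.mulVec x) := by
  have he : (fun x : Fin n → ℝ => M.mulVec x) = fun x i => ∑ j, M i j * x j := by
    ext x i; simp [Matrix.mulVec, dotProduct]
  rw [he]
  exact continuous_pi fun i =>
    continuous_finset_sum _ fun j _ => continuous_const.mul (continuous_apply j)

lemma mNorm_lt_one {n : ℕ} (M : Matrix (Fin n) (Fin n) ℝ) (hn : 0 < n)
    (h : ∀ x, vNorm x = 1 → vNorm (M.mulVec x) < 1) : mNorm M < 1 := by
  have hS : IsCompact {x : Fin n → ℝ | vNorm x = 1} := by
    apply Metric.isCompact_of_isClosed_isBounded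
    · exact isClosed_eq continuous_vNorm continuous_const
    · rw [Metric.isBounded_iff_subset_closedBall 0]
      refine ⟨1, fun x hx => ?_⟩
      simp only [Set.mem_setOf_eq] at hx
      rw [Metric.mem_closedBall, dist_pi_le_iff zero_le_one]
      intro i
      simp only [Pi.zero_apply, Real.dist_eq, sub_zero]
      have h1 : x i ^ 2 ≤ 1 := by
        have := Real.sq_sqrt (show (0:ℝ) ≤ ∑ i, x i ^ 2 by positivity)
        rw [vNorm] at hx
        rw [hx] at this
        calc x i ^ 2 ≤ ∑ j, x j ^ 2 :=
              Finset.single_le_sum (fun j _ => sq_nonneg (x j)) (Finset.mem_univ i)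
          _ = 1 := by rw [← this]; ring
      nlinarith [abs_nonneg (x i), sq_abs (x i)]
  have hne : ({x : Fin n → ℝ | vNorm x = 1}).Nonempty := by
    refine ⟨(fun i => if i = ⟨0, hn⟩ then 1 else 0 : Fin n → ℝ), ?_⟩
    simp only [Set.mem_setOf_eq, vNorm]
    have : (∑ i : Fin n, (if i = ⟨0, hn⟩ then (1:ℝ) else 0) ^ 2) = 1 := by
      rw [Finset.sum_eq_single (⟨0, hn⟩ : Fin n)]
      · simp
      · intro j _ hj; simp [hj]
      · simp
    rw [this]; exact Real.sqrt_one
  have hKc : IsCompact ((fun x => vNorm (M.mulVec x)) '' {x | vNorm x = 1}) :=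
    hS.image (continuous_vNorm.comp (continuous_mulVec M))
  have := hKc.sSup_mem (hne.image _)
  obtain ⟨x, hx, hfx⟩ := this
  rw [mNorm, ← hfx]
  exact h x hx


/-- For a kernel denoiser `W = D⁻¹K` (with `1` a simple eigenvalue,
i.e. `ker(I−W) = span{e}`), a nonzero diagonal `{0,1}` mask `A`,
`G = I − γAᵀA` with `γ ∈ (0,2)`, and `P = WG`, one has
`‖P‖_D = ‖D^{1/2} P D^{-1/2}‖₂ < 1`. -/
theorem statement9 {n : ℕ} (K : Matrix (Fin n) (Fin n) ℝ)
    (hKpsd : K.PosSemidef) (hKnn : ∀ i j, 0 ≤ K i j)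
    (d : Fin n → ℝ) (hd : d = K.mulVec (fun _ => 1)) (hdpos : ∀ i, 0 < d i)
    (W : Matrix (Fin n) (Fin n) ℝ)
    (hW : W = Matrix.diagonal (fun i => (d i)⁻¹) * K)
    (hWsimple : LinearMap.ker (Matrix.mulVecLin (1 - W)) =
      Submodule.span ℝ {(fun _ => 1 : Fin n → ℝ)})
    (A : Matrix (Fin n) (Fin n) ℝ)
    (hAdiag : ∀ i j, i ≠ j → A i j = 0) (hA01 : ∀ i, A i i = 0 ∨ A i i = 1)
    (hA0 : A ≠ 0)
    (γ : ℝ) (hγ : γ ∈ Set.Ioo (0 : ℝ) 2)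
    (G P : Matrix (Fin n) (Fin n) ℝ)
    (hG : G = 1 - γ • (Aᵀ * A)) (hP : P = W * G) :
    mNorm (Matrix.diagonal (fun i => Real.sqrt (d i)) * P *
      Matrix.diagonal (fun i => (Real.sqrt (d i))⁻¹)) < 1 := by
  obtain ⟨hγ0, hγ2⟩ := hγ
  -- masked index exists
  have hex : ∃ i, A i i = 1 := by
    by_contra h
    push_neg at h
    apply hA0
    ext i j
    by_cases hij : i = j
    · subst hij
      rcases hA01 i with h0 | h1
      · simpa using h0
      · exact absurd h1 (h i)
    · simpa using hAdiag i j hij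
  obtain ⟨i₀, hi₀⟩ := hex
  have hn : 0 < n := i₀.pos
  -- basic facts about sqrt d
  have hsd : ∀ i, 0 < Real.sqrt (d i) := fun i => Real.sqrt_pos.mpr (hdpos i)
  have hsd2 : ∀ i, Real.sqrt (d i) * Real.sqrt (d i) = d i :=
    fun i => Real.mul_self_sqrt (hdpos i).le
  set s : Fin n → ℝ := fun i => Real.sqrt (d i) with hs
  set si : Fin n → ℝ := fun i => (Real.sqrt (d i))⁻¹ with hsi
  set Si : Matrix (Fin n) (Fin n) ℝ := Matrix.diagonal si with hSi
  set g : Fin n → ℝ := fun i => 1 - γ * A i i with hg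
  set Gd : Matrix (Fin n) (Fin n) ℝ := Matrix.diagonal g with hGd
  set W₀ : Matrix (Fin n) (Fin n) ℝ := Si * K * Si with hW₀
  -- G is diagonal
  have hAd : A = Matrix.diagonal (fun i => A i i) := by
    ext i j
    by_cases hij : i = j
    · subst hij; simp
    · simp [Matrix.diagonal_apply_ne _ hij, hAdiag i j hij]
  have hdc : ∀ u v : Fin n → ℝ, Matrix.diagonal u * Matrix.diagonal v
      = Matrix.diagonal (fun i => u i * v i) := fun u v => Matrix.diagonal_mul_diagonal u v
  have hGdiag : G = Gd := by
    rw [hG, hGd]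
    conv_lhs => rw [hAd]
    rw [Matrix.diagonal_transpose, hdc,
      show (γ • Matrix.diagonal fun i => A i i * A i i)
          = Matrix.diagonal (γ • fun i => A i i * A i i) from
        (Matrix.diagonal_smul γ _).symm,
      ← Matrix.diagonal_one, Matrix.diagonal_sub]
    refine congrArg Matrix.diagonal (funext fun i => ?_)
    rcases hA01 i with h0 | h0 <;> simp [hg, h0]
  -- the conjugated matrix equals W₀ * Gd
  have hM : Matrix.diagonal s * P * Si = W₀ * Gd := by
    rw [hP, hW, hGdiag]
    have h1 : Matrix.diagonal s * Matrix.diagonal (fun i => (d i)⁻¹) = Si := by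
      rw [hdc, hSi]
      refine congrArg Matrix.diagonal (funext fun i => ?_)
      have h2 := (hsd i).ne'
      have h3 : (d i)⁻¹ = (Real.sqrt (d i))⁻¹ * (Real.sqrt (d i))⁻¹ := by
        rw [← mul_inv, hsd2]
      show Real.sqrt (d i) * (d i)⁻¹ = (Real.sqrt (d i))⁻¹
      rw [h3, ← mul_assoc, mul_inv_cancel₀ h2, one_mul]
    have h2 : Gd * Si = Si * Gd := by
      rw [hGd, hSi, hdc, hdc]
      exact congrArg Matrix.diagonal (funext fun i => mul_comm _ _)
    calc Matrix.diagonal s * (Matrix.diagonal (fun i => (d i)⁻¹) * K * Gd) * Si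
        = (Matrix.diagonal s * Matrix.diagonal (fun i => (d i)⁻¹)) * K * (Gd * Si) := by
          noncomm_ring
      _ = Si * K * (Si * Gd) := by rw [h1, h2]
      _ = W₀ * Gd := by rw [hW₀]; noncomm_ring
  -- hermitian facts
  have hSiH : Siᴴ = Si := by
    rw [hSi]
    ext i j
    by_cases h : i = j
    · subst h; simp
    · simp [Matrix.conjTranspose_apply, Matrix.diagonal_apply_ne _ h,
        Matrix.diagonal_apply_ne _ (Ne.symm h)]
  have hW₀psd : W₀.PosSemidef := by
    have h := hKpsd.mul_mul_conjTranspose_same Si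
    rw [hSiH] at h
    rwa [hW₀]
  have hdsum : ∀ i, d i = ∑ j, K i j := by
    intro i
    rw [hd]
    simp [Matrix.mulVec, dotProduct]
  have hKsym : ∀ i j, K i j = K j i := by
    intro i j
    have h := congrFun (congrFun hKpsd.1 j) i
    simpa [Matrix.conjTranspose_apply] using h
  have hstar : ∀ x : Fin n → ℝ, star x = x := fun x => by
    funext i; simp
  -- the Laplacian D - K is PSD
  have hLpsd : (Matrix.diagonal d - K).PosSemidef := by
    refine Matrix.PosSemidef.of_dotProduct_mulVec_nonneg ?_ ?_
    · have h1 : (Matrix.diagonal d).IsHermitian := by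
        show (Matrix.diagonal d)ᴴ = Matrix.diagonal d
        ext i j
        by_cases h : i = j
        · subst h; simp
        · simp [Matrix.conjTranspose_apply, Matrix.diagonal_apply_ne _ h,
            Matrix.diagonal_apply_ne _ (Ne.symm h)]
      exact h1.sub hKpsd.1
    · intro x
      rw [hstar x]
      have e1 : x ⬝ᵥ (Matrix.diagonal d) *ᵥ x = ∑ i, d i * (x i * x i) := by
        simp only [dotProduct, Matrix.mulVec_diagonal]
        exact Finset.sum_congr rfl fun i _ => by ring
      have e2 : x ⬝ᵥ K *ᵥ x = ∑ i, ∑ j, K i j * (x i * x j) := by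
        simp only [dotProduct, Matrix.mulVec]
        refine Finset.sum_congr rfl fun i _ => ?_
        rw [Finset.mul_sum]
        exact Finset.sum_congr rfl fun j _ => by ring
      have key : ∑ i, ∑ j, K i j * ((x i - x j) * (x i - x j))
          = 2 * (∑ i, d i * (x i * x i)) - 2 * (∑ i, ∑ j, K i j * (x i * x j)) := by
        have s1 : ∀ i, ∑ j, K i j * (x i * x i) = d i * (x i * x i) := by
          intro i
          rw [← Finset.sum_mul]
          rw [← hdsum i]
        have S1 : ∑ i, ∑ j, K i j * (x i * x i) = ∑ i, d i * (x i * x i) :=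
          Finset.sum_congr rfl fun i _ => s1 i
        have s2 : ∑ i, ∑ j, K i j * (x j * x j) = ∑ i, d i * (x i * x i) := by
          rw [Finset.sum_comm]
          refine Finset.sum_congr rfl fun j _ => ?_
          calc ∑ i, K i j * (x j * x j)
              = ∑ i, K j i * (x j * x j) :=
                Finset.sum_congr rfl fun i _ => by rw [hKsym i j]
            _ = (∑ i, K j i) * (x j * x j) := (Finset.sum_mul _ _ _).symm
            _ = d j * (x j * x j) := by rw [← hdsum j]
        calc ∑ i, ∑ j, K i j * ((x i - x j) * (x i - x j))
            = ∑ i, ∑ j, (K i j * (x i * x i) + K i j * (x j * x j)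
                - 2 * (K i j * (x i * x j))) :=
              Finset.sum_congr rfl fun i _ => Finset.sum_congr rfl fun j _ => by ring
          _ = (∑ i, ∑ j, K i j * (x i * x i)) + (∑ i, ∑ j, K i j * (x j * x j))
                - 2 * (∑ i, ∑ j, K i j * (x i * x j)) := by
              simp only [Finset.sum_add_distrib, Finset.sum_sub_distrib, ← Finset.mul_sum]
          _ = 2 * (∑ i, d i * (x i * x i)) - 2 * (∑ i, ∑ j, K i j * (x i * x j)) := by
              rw [S1, s2]
              ring
      have hnn : 0 ≤ ∑ i, ∑ j, K i j * ((x i - x j) * (x i - x j)) :=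
        Finset.sum_nonneg fun i _ => Finset.sum_nonneg fun j _ =>
          mul_nonneg (hKnn i j) (mul_self_nonneg _)
      rw [Matrix.sub_mulVec, dotProduct_sub, e1, e2]
      linarith
  -- 1 - W₀ is PSD
  have hDS : Si * Matrix.diagonal d * Si = 1 := by
    rw [hSi, hdc, hdc, ← Matrix.diagonal_one]
    refine congrArg Matrix.diagonal (funext fun i => ?_)
    show (Real.sqrt (d i))⁻¹ * d i * (Real.sqrt (d i))⁻¹ = 1
    have h2 := (hsd i).ne'
    field_simp
    rw [Real.sq_sqrt (hdpos i).le]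
  have hRpsd : (1 - W₀).PosSemidef := by
    have h := hLpsd.mul_mul_conjTranspose_same Si
    rw [hSiH] at h
    have e : Si * (Matrix.diagonal d - K) * Si = 1 - W₀ := by
      rw [Matrix.mul_sub, Matrix.sub_mul, hDS, hW₀]
    rwa [e] at h
  -- W₀ - W₀² is PSD
  have hTpsd : (W₀ - W₀ * W₀).PosSemidef := by
    open scoped MatrixOrder in
    have hQpsd : (CFC.sqrt W₀).PosSemidef := (CFC.sqrt_nonneg W₀).posSemidef
    open scoped MatrixOrder in
    have hQH : (CFC.sqrt W₀)ᴴ = CFC.sqrt W₀ := hQpsd.1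
    open scoped MatrixOrder in
    have hQQ : CFC.sqrt W₀ * CFC.sqrt W₀ = W₀ := CFC.sqrt_mul_sqrt_self W₀ hW₀psd.nonneg
    open scoped MatrixOrder in
    have h := hRpsd.mul_mul_conjTranspose_same (CFC.sqrt W₀)
    rw [hQH] at h
    have key : ∀ Q M : Matrix (Fin n) (Fin n) ℝ, Q * Q = M →
        Q * (1 - M) * Q = M - M * M := by
      intro Q M hQM
      rw [← hQM]; noncomm_ring
    rwa [key _ _ hQQ] at h
  -- symmetry of W₀
  have hW₀sym : W₀ᵀ = W₀ := by
    ext i j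
    have h := congrFun (congrFun hW₀psd.1 i) j
    simpa [Matrix.conjTranspose_apply, Matrix.transpose_apply] using h
  -- per-vector strict bound
  have hbound : ∀ x : Fin n → ℝ, vNorm x = 1 → vNorm ((W₀ * Gd).mulVec x) < 1 := by
    intro x hx
    set y : Fin n → ℝ := fun i => g i * x i with hy
    have hGx : Gd *ᵥ x = y := by
      funext i
      rw [hGd]
      simp [Matrix.mulVec_diagonal, hy]
    have hMx : (W₀ * Gd) *ᵥ x = W₀ *ᵥ y := by rw [← Matrix.mulVec_mulVec, hGx]
    set a : ℝ := y ⬝ᵥ (1 - W₀) *ᵥ y with ha'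
    set b : ℝ := y ⬝ᵥ (W₀ - W₀ * W₀) *ᵥ y with hb'
    set c : ℝ := x ⬝ᵥ x - y ⬝ᵥ y with hc'
    have ha : 0 ≤ a := by have h := hRpsd.dotProduct_mulVec_nonneg y; rwa [hstar y] at h
    have hb : 0 ≤ b := by have h := hTpsd.dotProduct_mulVec_nonneg y; rwa [hstar y] at h
    have hcsum : c = ∑ i, (1 - g i * g i) * (x i * x i) := by
      rw [hc']
      simp only [dotProduct, hy]
      rw [← Finset.sum_sub_distrib]
      exact Finset.sum_congr rfl fun i _ => by ring
    have hterm : ∀ i, 0 ≤ (1 - g i * g i) * (x i * x i) := by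
      intro i
      apply mul_nonneg _ (mul_self_nonneg _)
      rcases hA01 i with h0 | h0 <;> simp [hg, h0] <;> nlinarith
    have hc : 0 ≤ c := by
      rw [hcsum]
      exact Finset.sum_nonneg fun i _ => hterm i
    have hx2 : x ⬝ᵥ x = 1 := by rw [← vNorm_sq, hx]; norm_num
    -- energy identity
    have energy : vNorm ((W₀ * Gd) *ᵥ x) ^ 2 = y ⬝ᵥ (W₀ * W₀) *ᵥ y := by
      rw [hMx, vNorm_sq]
      calc (W₀ *ᵥ y) ⬝ᵥ (W₀ *ᵥ y)
          = ((W₀ *ᵥ y) ᵥ* W₀) ⬝ᵥ y := Matrix.dotProduct_mulVec _ _ _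
        _ = (W₀ᵀ *ᵥ (W₀ *ᵥ y)) ⬝ᵥ y := by rw [Matrix.mulVec_transpose]
        _ = ((W₀ * W₀) *ᵥ y) ⬝ᵥ y := by rw [hW₀sym, Matrix.mulVec_mulVec]
        _ = y ⬝ᵥ (W₀ * W₀) *ᵥ y := dotProduct_comm _ _
    have ident : y ⬝ᵥ y - y ⬝ᵥ (W₀ * W₀) *ᵥ y = a + b := by
      have hsplit : (1 : Matrix (Fin n) (Fin n) ℝ) - W₀ * W₀
          = (1 - W₀) + (W₀ - W₀ * W₀) := by noncomm_ring
      have h1 : a + b = y ⬝ᵥ ((1 : Matrix (Fin n) (Fin n) ℝ) - W₀ * W₀) *ᵥ y := by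
        rw [ha', hb', hsplit, Matrix.add_mulVec, dotProduct_add]
      rw [h1, Matrix.sub_mulVec, Matrix.one_mulVec, dotProduct_sub]
    have hsq : vNorm ((W₀ * Gd) *ᵥ x) ^ 2 = 1 - (a + b + c) := by
      rw [energy]
      have : c = 1 - y ⬝ᵥ y := by rw [hc', hx2]
      linarith [ident, this]
    -- strictness
    have strict : 0 < a + b + c := by
      by_contra hcon
      push_neg at hcon
      have ha0 : a = 0 := le_antisymm (by linarith) ha
      have hc0 : c = 0 := le_antisymm (by linarith) hc
      have h1 : (1 - W₀) *ᵥ y = 0 := by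
        apply (hRpsd.dotProduct_mulVec_zero_iff y).mp
        rw [hstar y]
        exact ha0
      have hWy : W₀ *ᵥ y = y := by
        rw [Matrix.sub_mulVec, Matrix.one_mulVec] at h1
        have h2 := sub_eq_zero.mp h1
        exact h2.symm
      have hzero : ∀ i, (1 - g i * g i) * (x i * x i) = 0 := by
        have hsum0 : ∑ i, (1 - g i * g i) * (x i * x i) = 0 := by
          rw [← hcsum, hc0]
        intro i
        exact (Finset.sum_eq_zero_iff_of_nonneg fun i _ => hterm i).mp hsum0 i
          (Finset.mem_univ i)
      have hxmask : ∀ i, A i i = 1 → x i = 0 := by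
        intro i h1i
        have h2 := hzero i
        have hgγ : g i = 1 - γ := by simp [hg, h1i]
        rw [hgγ] at h2
        have hpos : 0 < 1 - (1 - γ) * (1 - γ) := by nlinarith
        have h3 : x i * x i = 0 := by
          rcases mul_eq_zero.mp h2 with h | h
          · linarith
          · exact h
        exact mul_self_eq_zero.mp h3
      have hyx : y = x := by
        funext i
        rcases hA01 i with h0 | h1i
        · simp [hy, hg, h0]
        · simp [hy, hxmask i h1i]
      rw [hyx] at hWy
      -- transfer to an eigenvector of W
      set z : Fin n → ℝ := fun i => (Real.sqrt (d i))⁻¹ * x i with hz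
      have hzS : Si *ᵥ x = z := by
        funext i
        rw [hSi]
        simp [Matrix.mulVec_diagonal, hz, hsi]
      have hKz : ∀ i, (Real.sqrt (d i))⁻¹ * (K *ᵥ z) i = x i := by
        intro i
        have h4 := congrFun hWy i
        rw [hW₀, ← Matrix.mulVec_mulVec, ← Matrix.mulVec_mulVec, hzS] at h4
        simpa [hSi, Matrix.mulVec_diagonal, hsi] using h4
      have hWz : W *ᵥ z = z := by
        funext i
        have h2 := (hsd i).ne'
        have hKzi : (K *ᵥ z) i = Real.sqrt (d i) * x i := by
          have h5 := congrArg (fun t => Real.sqrt (d i) * t) (hKz i)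
          simpa [← mul_assoc, mul_inv_cancel₀ h2] using h5
        rw [hW, ← Matrix.mulVec_mulVec]
        show ((Matrix.diagonal fun i => (d i)⁻¹) *ᵥ (K *ᵥ z)) i = z i
        rw [Matrix.mulVec_diagonal, hKzi, hz]
        show (d i)⁻¹ * (Real.sqrt (d i) * x i) = (Real.sqrt (d i))⁻¹ * x i
        have h3 : (d i)⁻¹ = (Real.sqrt (d i))⁻¹ * (Real.sqrt (d i))⁻¹ := by
          rw [← mul_inv, hsd2]
        rw [h3, mul_assoc, ← mul_assoc (Real.sqrt (d i))⁻¹ (Real.sqrt (d i)) (x i),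
          inv_mul_cancel₀ h2, one_mul]
      have hker : z ∈ LinearMap.ker (Matrix.mulVecLin (1 - W)) := by
        rw [LinearMap.mem_ker, Matrix.mulVecLin_apply, Matrix.sub_mulVec,
          Matrix.one_mulVec, hWz, sub_self]
      rw [hWsimple, Submodule.mem_span_singleton] at hker
      obtain ⟨t, ht⟩ := hker
      have hzt : ∀ i, z i = t := by
        intro i
        have h4 := congrFun ht i
        simpa using h4.symm
      have hxi : ∀ i, x i = Real.sqrt (d i) * t := by
        intro i
        have h2 := (hsd i).ne'
        have h4 := hzt i
        rw [hz] at h4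
        have h5 := congrArg (fun u => Real.sqrt (d i) * u) h4
        simpa [← mul_assoc, mul_inv_cancel₀ h2] using h5
      have ht0 : t = 0 := by
        have h4 := hxi i₀
        rw [hxmask i₀ hi₀] at h4
        rcases mul_eq_zero.mp h4.symm with h | h
        · exact absurd h (hsd i₀).ne'
        · exact h
      have hx0 : vNorm x = 0 := by
        have : x = 0 := by
          funext i
          rw [hxi i, ht0, mul_zero]
          rfl
        rw [this]
        simp [vNorm]
      rw [hx] at hx0
      norm_num at hx0
    nlinarith [vNorm_nonneg ((W₀ * Gd) *ᵥ x), strict, hsq]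
  rw [hM]
  exact mNorm_lt_one _ hn hbound
end
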